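/- arXiv:1410.5300 — 3 statements merged into one kernel-verified Lean document; each statement's English description precedes it below -/
import Mathlib

section
/- For every integer n ≥ 0, every sequence of real numbers ᾱ = (α₀, α₁, …, α_{n−1}) and every nonzero real number ℓ, the multiparameter Cauchy numbers of the first kind satisfy C_{n,ᾱ,ℓ} = Σ_{j=0}^{n} Σ_{m=j}^{n} S(n,m;ᾱ) s(m,j) ℓ^{j+1} / (j+1). -/
open Finset

/-- Falling factorial (x)_m = x(x-1)⋯(x-m+1) of a real number. -/
noncomputable def ffall (x : ℝ) (m : ℕ) : ℝ := ∏ i ∈ Finset.range m, (x - (i : ℝ))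

theorem Finset.sum_range_sum_range_succ_comm {M : Type*} [AddCommMonoid M] (n : ℕ)
    (f : ℕ → ℕ → M) :
    ∑ m ∈ range (n + 1), ∑ j ∈ range (m + 1), f m j =
      ∑ j ∈ range (n + 1), ∑ m ∈ Icc j n, f m j := by
  refine sum_comm' fun m j => ?_
  simp only [mem_range, Nat.lt_succ_iff, mem_Icc]
  omega

theorem integral_sum_mul_pow (ℓ : ℝ) (t : Finset ℕ) (c : ℕ → ℝ) :
    ∫ x in (0:ℝ)..ℓ, ∑ j ∈ t, c j * x ^ j = ∑ j ∈ t, c j * ℓ ^ (j + 1) / ((j : ℝ) + 1) := by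
  rw [intervalIntegral.integral_finsetSum fun j _ =>
    (intervalIntegral.intervalIntegrable_pow j).const_mul _]
  refine sum_congr rfl fun j _ => ?_
  rw [intervalIntegral.integral_const_mul, integral_pow]
  ring

theorem stmt3_general (n : ℕ) (α : ℕ → ℝ) (ℓ : ℝ)
    (S : ℕ → ℝ) (st : ℕ → ℕ → ℝ)
    (hS : ∀ x : ℝ, ∏ i ∈ range n, (x - α i) = ∑ m ∈ range (n + 1), S m * ffall x m)
    (hst : ∀ m ≤ n, ∀ x : ℝ, ffall x m = ∑ j ∈ range (m + 1), st m j * x ^ j) :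
    (∫ x in (0:ℝ)..ℓ, ∏ i ∈ range n, (x - α i)) =
      ∑ j ∈ range (n + 1), ∑ m ∈ Icc j n,
        S m * st m j * ℓ ^ (j + 1) / ((j : ℝ) + 1) := by
  have monomial_expansion : ∀ x : ℝ, ∏ i ∈ range n, (x - α i) =
      ∑ j ∈ range (n + 1), (∑ m ∈ Icc j n, S m * st m j) * x ^ j := by
    intro x
    simp_rw [hS x, sum_mul, ← sum_range_sum_range_succ_comm]
    refine sum_congr rfl fun m hm => ?_
    rw [hst m (Nat.lt_succ_iff.mp (mem_range.mp hm)) x, mul_sum]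
    simp_rw [mul_assoc]
  simp_rw [monomial_expansion, integral_sum_mul_pow, sum_mul, sum_div]

theorem stmt3 (n : ℕ) (α : ℕ → ℝ) (ℓ : ℝ) (hℓ : ℓ ≠ 0)
    (S : ℕ → ℝ) (st : ℕ → ℕ → ℝ)
    (hS : ∀ x : ℝ, ∏ i ∈ range n, (x - α i) = ∑ m ∈ range (n + 1), S m * ffall x m)
    (hst : ∀ m ≤ n, ∀ x : ℝ, ffall x m = ∑ j ∈ range (m + 1), st m j * x ^ j) :
    (∫ x in (0:ℝ)..ℓ, ∏ i ∈ range n, (x - α i)) =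
      ∑ j ∈ range (n + 1), ∑ m ∈ Icc j n,
        S m * st m j * ℓ ^ (j + 1) / ((j : ℝ) + 1) :=
  stmt3_general n α ℓ S st hS hst
end

section
/- For all integers n ≥ 0 and k ≥ 1, every sequence of nonzero real numbers ᾱ = (α₀, α₁, …, α_{n−1}) and all nonzero real numbers ℓ₁, …, ℓ_k, the multiparameter poly-Cauchy numbers of the first kind satisfy C_{n,L}^{(k)}(ᾱ) = (−1)^n (∏_{i=0}^{n−1} α_i) Σ_{m=0}^{n} P_m(−H_{n,ᾱ}^{(1)}, −H_{n,ᾱ}^{(2)}, …, −H_{n,ᾱ}^{(m)}) (ℓ₁ℓ₂⋯ℓ_k)^{m+1} / (m+1)^k. -/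
open Finset

/-- Iterated integral ∫₀^{ℓ₁}⋯∫₀^{ℓ_k} f(x₁x₂⋯x_k) dx₁⋯dx_k over the list of bounds. -/
noncomputable def iterInt : List ℝ → (ℝ → ℝ) → ℝ
  | [], f => f 1
  | l :: ls, f => ∫ x in (0:ℝ)..l, iterInt ls (fun y => f (x * y))

/-- Modified Bell polynomial P_m(x₁,…,x_m) = Σ_{k₁+2k₂+⋯+mk_m=m} ∏ (1/kᵢ!) (xᵢ/i)^{kᵢ}. -/
noncomputable def modBell (m : ℕ) (x : ℕ → ℝ) : ℝ :=
  ∑ K ∈ (Fintype.piFinset fun _ : Fin m => Finset.range (m + 1)).filter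
      (fun K => ∑ i : Fin m, (i.1 + 1) * K i = m),
    ∏ i : Fin m, (1 / ((K i).factorial : ℝ)) * (x (i.1 + 1) / ((i.1 : ℝ) + 1)) ^ K i

/-!
Writing `t - αᵢ = -αᵢ (1 - yᵢ t)` with `yᵢ = 1 / αᵢ`, the integrand is `(-1)ⁿ ∏ αᵢ` times
`∏ (1 - yᵢ t) = ∑ₘ (-1)ᵐ eₘ(y) tᵐ`. Removing one part from a partition shows that the modified Bell
polynomials satisfy `m Pₘ = ∑_{i=1}^m xᵢ Pₘ₋ᵢ`; for `xᵣ = -pᵣ(y)` (power sums) this is Newton's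
identity for `(-1)ᵐ eₘ(y)`, so `Pₘ(-p₁(y), …, -pₘ(y)) = (-1)ᵐ eₘ(y)`. Finally the iterated integral
of `(x₁⋯x_k)ᵐ` over `∏ [0, ℓᵢ]` is `(ℓ₁⋯ℓ_k)ᵐ⁺¹ / (m + 1)ᵏ`.
-/

theorem iterInt_sum_mul_pow (ls : List ℝ) (s : Finset ℕ) (a : ℕ → ℝ) :
    iterInt ls (fun t => ∑ m ∈ s, a m * t ^ m) =
      ∑ m ∈ s, a m * ls.prod ^ (m + 1) / ((m : ℝ) + 1) ^ ls.length := by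
  induction ls generalizing a with
  | nil => simp [iterInt]
  | cons l ls ih =>
    have inner : ∀ x : ℝ, iterInt ls (fun y => ∑ m ∈ s, a m * (x * y) ^ m) =
        ∑ m ∈ s, a m * ls.prod ^ (m + 1) / ((m : ℝ) + 1) ^ ls.length * x ^ m := by
      intro x
      simpa only [mul_pow, mul_assoc, mul_left_comm _ (x ^ _), mul_div_assoc, mul_comm _ (x ^ _)]
        using ih fun m => a m * x ^ m
    simp only [iterInt, inner]
    rw [intervalIntegral.integral_finsetSum fun m _ => by
      apply Continuous.intervalIntegrable; fun_prop]
    refine sum_congr rfl fun m _ => ?_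
    rw [intervalIntegral.integral_const_mul, integral_pow, List.prod_cons, List.length_cons]
    field_simp
    ring

/-- Partitions of `m` into parts at most `N`, as multiplicity vectors: `K i` is the number of parts
equal to `i + 1`. -/
def weightedParts (N m : ℕ) : Finset (Fin N → ℕ) :=
  (Fintype.piFinset fun _ : Fin N => range (m + 1)).filter
    fun K => ∑ i : Fin N, (i.1 + 1) * K i = m

noncomputable def bellFactor (x : ℕ → ℝ) (i c : ℕ) : ℝ :=
  (1 / (c.factorial : ℝ)) * (x (i + 1) / ((i : ℝ) + 1)) ^ c

noncomputable def bellWeight (x : ℕ → ℝ) {N : ℕ} (K : Fin N → ℕ) : ℝ :=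
  ∏ i : Fin N, bellFactor x i (K i)

theorem modBell_eq_sum_bellWeight (m : ℕ) (x : ℕ → ℝ) :
    modBell m x = ∑ K ∈ weightedParts m m, bellWeight x K :=
  rfl

@[simp]
theorem bellFactor_zero (x : ℕ → ℝ) (i : ℕ) : bellFactor x i 0 = 1 := by
  simp [bellFactor]

theorem natCast_mul_bellFactor_succ (x : ℕ → ℝ) (i c : ℕ) :
    (((i + 1) * (c + 1) : ℕ) : ℝ) * bellFactor x i (c + 1) = x (i + 1) * bellFactor x i c := by
  simp only [bellFactor, Nat.factorial_succ, pow_succ]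
  push_cast
  field_simp

theorem mem_weightedParts {N m : ℕ} {K : Fin N → ℕ} :
    K ∈ weightedParts N m ↔ ∑ i : Fin N, (i.1 + 1) * K i = m := by
  simp only [weightedParts, mem_filter, Fintype.mem_piFinset, mem_range,
    and_iff_right_iff_imp]
  rintro rfl i
  have := single_le_sum (f := fun j : Fin N => (j.1 + 1) * K j) (fun _ _ => Nat.zero_le _)
    (mem_univ i)
  nlinarith

theorem last_eq_zero_of_mem_weightedParts {N m : ℕ} (hm : m ≤ N) {K : Fin (N + 1) → ℕ}
    (hK : K ∈ weightedParts (N + 1) m) : K (Fin.last N) = 0 := by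
  rw [mem_weightedParts, Fin.sum_univ_castSucc] at hK
  simp only [Fin.val_last] at hK
  by_contra h
  have : N + 1 ≤ (N + 1) * K (Fin.last N) := Nat.le_mul_of_pos_right _ (Nat.pos_of_ne_zero h)
  omega

theorem sum_bellWeight_weightedParts_succ (x : ℕ → ℝ) {N m : ℕ} (hm : m ≤ N) :
    ∑ K ∈ weightedParts (N + 1) m, bellWeight x K =
      ∑ K ∈ weightedParts N m, bellWeight x K := by
  refine sum_nbij' Fin.init (Fin.snoc · 0) (fun K hK => ?_) (fun K hK => ?_) (fun K hK => ?_)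
    (fun K _ => Fin.init_snoc _ _) (fun K hK => ?_)
  · have h0 := last_eq_zero_of_mem_weightedParts hm hK
    rw [mem_weightedParts, Fin.sum_univ_castSucc, h0] at hK
    simpa [mem_weightedParts, Fin.init] using hK
  · simpa [mem_weightedParts, Fin.sum_univ_castSucc] using hK
  · simp [← last_eq_zero_of_mem_weightedParts hm hK]
  · simp [bellWeight, Fin.prod_univ_castSucc, Fin.init, last_eq_zero_of_mem_weightedParts hm hK]

theorem sum_bellWeight_weightedParts_of_le (x : ℕ → ℝ) {N m : ℕ} (hm : m ≤ N) :
    ∑ K ∈ weightedParts N m, bellWeight x K = modBell m x := by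
  induction N, hm using Nat.le_induction with
  | base => rfl
  | succ N hmN ih => rw [sum_bellWeight_weightedParts_succ x hmN, ih]

theorem weightedSum_add_single {N : ℕ} (K : Fin N → ℕ) (i : Fin N) :
    ∑ j : Fin N, (j.1 + 1) * (K + Pi.single i 1 : Fin N → ℕ) j =
      ∑ j : Fin N, (j.1 + 1) * K j + (i.1 + 1) := by
  simp [mul_add, sum_add_distrib, Pi.single_apply]

theorem natCast_mul_bellWeight_add_single (x : ℕ → ℝ) {N : ℕ} (K : Fin N → ℕ)
    (i : Fin N) :
    (((i.1 + 1) * (K i + 1) : ℕ) : ℝ) * bellWeight x (K + Pi.single i 1) =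
      x (i.1 + 1) * bellWeight x K := by
  have off_i : ∏ j ∈ univ.erase i, bellFactor x j ((K + Pi.single i 1 : Fin N → ℕ) j) =
      ∏ j ∈ univ.erase i, bellFactor x j (K j) :=
    prod_congr rfl fun j hj => by simp [ne_of_mem_erase hj]
  rw [bellWeight, bellWeight, ← mul_prod_erase univ _ (mem_univ i),
    ← mul_prod_erase univ _ (mem_univ i), off_i, Pi.add_apply, Pi.single_eq_same, ← mul_assoc,
    natCast_mul_bellFactor_succ, mul_assoc]

-- Adding a part `i + 1` maps `weightedParts N (m - (i + 1))` bijectively onto the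
-- `K ∈ weightedParts N m` with `K i ≠ 0`; the others contribute `0`.
theorem sum_natCast_mul_bellWeight (x : ℕ → ℝ) {N m : ℕ} (i : Fin N) (hi : i.1 + 1 ≤ m) :
    ∑ K ∈ weightedParts N m, (((i.1 + 1) * K i : ℕ) : ℝ) * bellWeight x K =
      x (i.1 + 1) * ∑ K ∈ weightedParts N (m - (i.1 + 1)), bellWeight x K := by
  rw [mul_sum]
  symm
  refine sum_of_injOn (· + Pi.single i 1) (fun K _ K' _ h => add_right_cancel h)
    (fun K hK => ?_) (fun K hK hK_img => ?_) (fun K _ => ?_)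
  · rw [mem_coe, mem_weightedParts] at hK ⊢
    rw [weightedSum_add_single, hK]
    omega
  · rw [mem_weightedParts] at hK
    by_contra hne
    have hKi : K i ≠ 0 := fun h => hne (by simp [h])
    have hcancel : K - Pi.single i 1 + Pi.single i 1 = K := by
      ext j
      rcases eq_or_ne j i with rfl | hj
      · simp only [Pi.add_apply, Pi.sub_apply, Pi.single_eq_same]
        omega
      · simp [hj]
    refine hK_img ⟨K - Pi.single i 1, ?_, hcancel⟩
    have := weightedSum_add_single (K - Pi.single i 1) i
    rw [hcancel, hK] at this
    rw [mem_coe, mem_weightedParts]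
    omega
  · rw [← natCast_mul_bellWeight_add_single]
    simp

theorem natCast_mul_modBell (m : ℕ) (x : ℕ → ℝ) :
    (m : ℝ) * modBell m x = ∑ i ∈ range m, x (i + 1) * modBell (m - (i + 1)) x := by
  calc (m : ℝ) * modBell m x
      = ∑ K ∈ weightedParts m m,
          ∑ i : Fin m, (((i.1 + 1) * K i : ℕ) : ℝ) * bellWeight x K := by
        rw [modBell_eq_sum_bellWeight, mul_sum]
        refine sum_congr rfl fun K hK => ?_
        rw [← sum_mul, ← Nat.cast_sum, mem_weightedParts.1 hK]
    _ = ∑ i : Fin m, x (i.1 + 1) * modBell (m - (i.1 + 1)) x := by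
        rw [sum_comm]
        refine sum_congr rfl fun i _ => ?_
        rw [sum_natCast_mul_bellWeight x i i.2, sum_bellWeight_weightedParts_of_le x (by omega)]
    _ = _ := Fin.sum_univ_eq_sum_range (fun i => x (i + 1) * modBell (m - (i + 1)) x) m

open MvPolynomial in
theorem modBell_neg_psum {σ : Type*} [Fintype σ] (y : σ → ℝ) (m : ℕ) :
    modBell m (fun r => -∑ j, y j ^ r) = (-1) ^ m * aeval y (esymm σ ℝ m) := by
  refine Nat.strong_induction_on m fun m ih => ?_
  rcases m.eq_zero_or_pos with rfl | hm
  · simp [modBell]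
  set e : ℕ → ℝ := fun a => aeval y (esymm σ ℝ a)
  set p : ℕ → ℝ := fun r => ∑ j, y j ^ r
  have newton :
      (m : ℝ) * e m = (-1) ^ (m + 1) * ∑ i ∈ range m, (-1) ^ i * e i * p (m - i) := by
    have h := congrArg (aeval y) (mul_esymm_eq_sum σ ℝ m)
    simp only [map_mul, map_sum, map_pow, map_neg, map_one, map_natCast] at h
    rw [h, sum_filter, Nat.sum_antidiagonal_eq_sum_range_succ_mk, sum_range_succ,
      if_neg (lt_irrefl m), add_zero]
    congr 1
    refine sum_congr rfl fun i hi => ?_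
    rw [if_pos (mem_range.1 hi)]
    simp [e, p, psum]
  have sign : (-1 : ℝ) ^ m * (-1) ^ (m + 1) = -1 := by
    rw [← pow_add]; exact Odd.neg_one_pow ⟨m, by ring⟩
  refine mul_left_cancel₀ (Nat.cast_ne_zero.2 hm.ne') ?_
  rw [natCast_mul_modBell, mul_left_comm, newton, ← mul_assoc, sign, ← sum_range_reflect,
    neg_one_mul, ← sum_neg_distrib]
  refine sum_congr rfl fun i hi => ?_
  have hi : i < m := mem_range.1 hi
  rw [ih _ (by omega), show m - 1 - i + 1 = m - i by omega, show m - (m - i) = i by omega]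
  ring

open MvPolynomial in
theorem prod_one_sub_mul_eq_sum_esymm {σ : Type*} [Fintype σ] (y : σ → ℝ) (t : ℝ) :
    ∏ j, (1 - y j * t) =
      ∑ m ∈ range (Fintype.card σ + 1), (-1) ^ m * aeval y (esymm σ ℝ m) * t ^ m := by
  simp_rw [sub_eq_add_neg, prod_one_add]
  rw [sum_powerset, card_univ]
  simp only [esymm, map_sum, map_prod, aeval_X, sum_mul, mul_sum]
  refine sum_congr rfl fun m _ => sum_congr rfl fun s hs => ?_
  rw [prod_neg, prod_mul_distrib, prod_const, (mem_powersetCard.1 hs).2]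
  ring

theorem prod_one_sub_mul_eq_sum_modBell {ι : Type*} (s : Finset ι) (y : ι → ℝ) (t : ℝ) :
    ∏ j ∈ s, (1 - y j * t) =
      ∑ m ∈ range (#s + 1), modBell m (fun r => -∑ j ∈ s, y j ^ r) * t ^ m := by
  rw [← prod_coe_sort, prod_one_sub_mul_eq_sum_esymm, Fintype.card_coe]
  refine sum_congr rfl fun m _ => ?_
  rw [← modBell_neg_psum]
  congr 2
  funext r
  rw [sum_coe_sort s (fun j => y j ^ r)]

theorem prod_sub_eq_sum_modBell {ι : Type*} (s : Finset ι) (α : ι → ℝ)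
    (hα : ∀ i ∈ s, α i ≠ 0) (t : ℝ) :
    ∏ i ∈ s, (t - α i) = (-1) ^ #s * (∏ i ∈ s, α i) *
      ∑ m ∈ range (#s + 1), modBell m (fun r => -∑ j ∈ s, 1 / α j ^ r) * t ^ m := by
  calc ∏ i ∈ s, (t - α i) = ∏ i ∈ s, -α i * (1 - (α i)⁻¹ * t) :=
        prod_congr rfl fun i hi => by field_simp [hα i hi]; ring
    _ = _ := by
        simp_rw [prod_mul_distrib, prod_neg, prod_one_sub_mul_eq_sum_modBell, inv_pow, one_div]

theorem stmt5_general (n k : ℕ) (α : ℕ → ℝ) (hα : ∀ i < n, α i ≠ 0)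
    (L : Fin k → ℝ) :
    iterInt (List.ofFn L) (fun t => ∏ i ∈ range n, (t - α i)) =
      (-1 : ℝ) ^ n * (∏ i ∈ range n, α i) *
        ∑ m ∈ range (n + 1),
          modBell m (fun r => -∑ j ∈ range n, 1 / α j ^ r) *
            (∏ i, L i) ^ (m + 1) / ((m : ℝ) + 1) ^ k := by
  have expand : (fun t => ∏ i ∈ range n, (t - α i)) = fun t => ∑ m ∈ range (n + 1),
      (-1) ^ n * (∏ i ∈ range n, α i) * modBell m (fun r => -∑ j ∈ range n, 1 / α j ^ r) *
        t ^ m := by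
    funext t
    rw [prod_sub_eq_sum_modBell _ _ (fun i hi => hα i (mem_range.1 hi)), card_range, mul_sum]
    simp only [mul_assoc]
  rw [expand, iterInt_sum_mul_pow, List.prod_ofFn, List.length_ofFn, mul_sum]
  refine sum_congr rfl fun m _ => by ring

theorem stmt5 (n k : ℕ) (hk : 1 ≤ k) (α : ℕ → ℝ) (hα : ∀ i < n, α i ≠ 0)
    (L : Fin k → ℝ) (hL : ∀ i, L i ≠ 0) :
    iterInt (List.ofFn L) (fun t => ∏ i ∈ range n, (t - α i)) =
      (-1 : ℝ) ^ n * (∏ i ∈ range n, α i) *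
        ∑ m ∈ range (n + 1),
          modBell m (fun r => -∑ j ∈ range n, 1 / α j ^ r) *
            (∏ i, L i) ^ (m + 1) / ((m : ℝ) + 1) ^ k :=
  stmt5_general n k α hα L
end

section
/- For all integers n ≥ 0 and k ≥ 1, every sequence of real numbers ᾱ = (α₀, α₁, …, α_{n−1}), all nonzero real numbers ℓ₁, …, ℓ_k, and every real number z, the multiparameter poly-Cauchy polynomials of the first kind are expressed through the multiparameter poly-Bernoulli polynomials by C_{n,L}^{(k)}(z;ᾱ) = Σ_{j=0}^{n} Σ_{m=j}^{n} (−1)^{m−j} (s_ᾱ(m,j) s_ᾱ(n,m) / m!) B_{j,ᾱ,L}^{(k)}(z). -/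
/-!
Writing `T_p` for the iterated integral of `(t - z) ^ p`, the expansion
`∏ (t - α_i - z) = ∑_m s_ᾱ(n,m) (t - z) ^ m` and termwise integration give `C = ∑_m s_ᾱ(n,m) T_m`,
while the binomial theorem turns the poly-Bernoulli polynomial into
`B_j = ∑_p (-1)^(j+p) p! S_ᾱ(j,p) T_p`. The right-hand side then collapses to the same sum by the
orthogonality `∑_j s_ᾱ(m,j) S_ᾱ(j,p) = δ_{mp}`: the lower-triangular matrices of `S_ᾱ` and `s_ᾱ`
multiply to a matrix fixing every vector `(x ^ j)_j`, hence to the identity (Vandermonde).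
-/

open Finset Matrix

theorem continuous_iterInt {X : Type*} [TopologicalSpace X] (ls : List ℝ) {F : X → ℝ → ℝ}
    (hF : Continuous (Function.uncurry F)) : Continuous fun x => iterInt ls (F x) := by
  induction ls generalizing X with
  | nil => exact hF.comp (continuous_id.prodMk continuous_const)
  | cons l ls ih =>
    have hG : Continuous (Function.uncurry fun x u => iterInt ls fun y => F x (u * y)) :=
      ih (F := fun (p : X × ℝ) y => F p.1 (p.2 * y)) (by fun_prop)
    exact intervalIntegral.continuous_parametric_intervalIntegral_of_continuous' hG 0 l

theorem iterInt_sum {ι : Type*} (ls : List ℝ) (s : Finset ι) {f : ι → ℝ → ℝ}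
    (hf : ∀ i ∈ s, Continuous (f i)) :
    iterInt ls (fun t => ∑ i ∈ s, f i t) = ∑ i ∈ s, iterInt ls (f i) := by
  induction ls generalizing f with
  | nil => simp [iterInt]
  | cons l ls ih =>
    simp only [iterInt]
    rw [← intervalIntegral.integral_finsetSum]
    · congr 1
      funext x
      exact ih (f := fun i y => f i (x * y)) fun i hi => (hf i hi).comp (by fun_prop)
    · intro i hi
      exact (continuous_iterInt ls (F := fun x y => f i (x * y))
        ((hf i hi).comp (by fun_prop))).intervalIntegrable _ _

theorem iterInt_const_mul (ls : List ℝ) (c : ℝ) (f : ℝ → ℝ) :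
    iterInt ls (fun t => c * f t) = c * iterInt ls f := by
  induction ls generalizing f with
  | nil => rfl
  | cons l ls ih =>
    simp only [iterInt, ih]
    exact intervalIntegral.integral_const_mul c _

theorem iterInt_pow (ls : List ℝ) (m : ℕ) :
    iterInt ls (fun t => t ^ m) = ls.prod ^ (m + 1) / ((m : ℝ) + 1) ^ ls.length := by
  induction ls with
  | nil => simp [iterInt]
  | cons l ls ih =>
    simp only [iterInt, mul_pow, iterInt_const_mul, ih, intervalIntegral.integral_mul_const,
      integral_pow, List.prod_cons, List.length_cons]
    field_simp
    ring

theorem iterInt_sub_pow (ls : List ℝ) (z : ℝ) (p : ℕ) :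
    iterInt ls (fun t => (t - z) ^ p) = ∑ i ∈ range (p + 1),
      (p.choose i : ℝ) * ls.prod ^ (p - i + 1) / (((p - i : ℕ) : ℝ) + 1) ^ ls.length * (-z) ^ i := by
  have hexpand : (fun t : ℝ => (t - z) ^ p) =
      fun t => ∑ i ∈ range (p + 1), ((p.choose i : ℝ) * (-z) ^ i) * t ^ (p - i) := by
    funext t
    rw [sub_eq_neg_add, add_pow]
    exact sum_congr rfl fun i _ => by ring
  rw [hexpand, iterInt_sum _ _ fun i _ => by fun_prop]
  refine sum_congr rfl fun i _ => ?_
  rw [iterInt_const_mul, iterInt_pow]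
  ring

theorem Matrix.eq_one_of_mulVec_pow {R : Type*} [CommRing R] [IsDomain R] [CharZero R] {N : ℕ}
    {M : Matrix (Fin N) (Fin N) R}
    (h : ∀ x : R, M *ᵥ (fun j : Fin N => x ^ (j : ℕ)) = fun j : Fin N => x ^ (j : ℕ)) :
    M = 1 := by
  rw [← sub_eq_zero]
  funext a
  refine Matrix.eq_zero_of_forall_index_sum_mul_pow_eq_zero (f := fun j : Fin N => ((j : ℕ) : R))
    (Nat.cast_injective.comp Fin.val_injective) fun j => ?_
  have := congrFun (h ((j : ℕ) : R)) a
  simp only [Matrix.mulVec, dotProduct] at this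
  simp [sub_mul, this, Matrix.one_apply]

/-- Entries above the diagonal are zeroed: `s m j` and `S p m` are unconstrained for `j > m`. -/
def lowerTriangle (n : ℕ) (f : ℕ → ℕ → ℝ) : Matrix (Fin (n + 1)) (Fin (n + 1)) ℝ :=
  Matrix.of fun a b => if (b : ℕ) ≤ a then f a b else 0

theorem lowerTriangle_mulVec (n : ℕ) (f : ℕ → ℕ → ℝ) (v : ℕ → ℝ) (a : Fin (n + 1)) :
    (lowerTriangle n f *ᵥ fun b => v b) a = ∑ b ∈ range (a + 1), f a b * v b := by
  simp only [Matrix.mulVec, dotProduct, lowerTriangle, Matrix.of_apply, ite_mul, zero_mul]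
  rw [Fin.sum_univ_eq_sum_range (fun b => if b ≤ a then f a b * v b else 0), ← sum_filter]
  congr 1
  ext b
  simp only [mem_filter, mem_range]
  omega

section Stirling

variable {n : ℕ} {α : ℕ → ℝ} {s S : ℕ → ℕ → ℝ}

theorem lowerTriangle_mul_lowerTriangle_eq_one
    (hs : ∀ m ≤ n, ∀ x : ℝ, ∏ i ∈ range m, (x - α i) = ∑ j ∈ range (m + 1), s m j * x ^ j)
    (hS : ∀ p ≤ n, ∀ x : ℝ, x ^ p = ∑ m ∈ range (p + 1), S p m * ∏ i ∈ range m, (x - α i)) :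
    lowerTriangle n s * lowerTriangle n S = 1 := by
  rw [mul_eq_one_comm]
  refine Matrix.eq_one_of_mulVec_pow fun x => ?_
  have hnewton : (lowerTriangle n s *ᵥ fun j : Fin (n + 1) => x ^ (j : ℕ)) =
      fun m : Fin (n + 1) => ∏ i ∈ range m, (x - α i) :=
    funext fun m => (lowerTriangle_mulVec n s (x ^ ·) m).trans (hs m m.is_le x).symm
  rw [← Matrix.mulVec_mulVec, hnewton]
  exact funext fun p => (lowerTriangle_mulVec n S _ p).trans (hS p p.is_le x).symm

theorem sum_stirling_mul_sum_stirling
    (hs : ∀ m ≤ n, ∀ x : ℝ, ∏ i ∈ range m, (x - α i) = ∑ j ∈ range (m + 1), s m j * x ^ j)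
    (hS : ∀ p ≤ n, ∀ x : ℝ, x ^ p = ∑ m ∈ range (p + 1), S p m * ∏ i ∈ range m, (x - α i))
    (U : ℕ → ℝ) {m : ℕ} (hm : m ≤ n) :
    ∑ j ∈ range (m + 1), s m j * ∑ p ∈ range (j + 1), S j p * U p = U m := by
  have hSU : (lowerTriangle n S *ᵥ fun p : Fin (n + 1) => U p) =
      fun j : Fin (n + 1) => ∑ p ∈ range (j + 1), S j p * U p :=
    funext (lowerTriangle_mulVec n S U)
  have h := congrFun (Matrix.mulVec_mulVec (fun p : Fin (n + 1) => U p)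
    (lowerTriangle n s) (lowerTriangle n S)) ⟨m, by omega⟩
  rwa [hSU, lowerTriangle_mulVec n s (fun j => ∑ p ∈ range (j + 1), S j p * U p),
    lowerTriangle_mul_lowerTriangle_eq_one hs hS, Matrix.one_mulVec] at h

theorem sum_stirling_bernoulli
    (hs : ∀ m ≤ n, ∀ x : ℝ, ∏ i ∈ range m, (x - α i) = ∑ j ∈ range (m + 1), s m j * x ^ j)
    (hS : ∀ p ≤ n, ∀ x : ℝ, x ^ p = ∑ m ∈ range (p + 1), S p m * ∏ i ∈ range m, (x - α i))
    (T : ℕ → ℝ) :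
    ∑ j ∈ range (n + 1), ∑ m ∈ Icc j n,
        (-1 : ℝ) ^ (m - j) * (s m j * s n m / (m.factorial : ℝ)) *
          ((-1 : ℝ) ^ j * ∑ p ∈ range (j + 1), (-1 : ℝ) ^ p * (p.factorial : ℝ) * S j p * T p)
      = ∑ m ∈ range (n + 1), s n m * T m := by
  rw [sum_comm' (s' := fun m => range (m + 1)) (t' := range (n + 1))
    (by intro j m; simp only [mem_range, mem_Icc]; omega)]
  refine sum_congr rfl fun m hmem => ?_
  have hm : m ≤ n := Nat.lt_succ_iff.mp (mem_range.mp hmem)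
  have hfactor : ∀ j ∈ range (m + 1),
      (-1 : ℝ) ^ (m - j) * (s m j * s n m / (m.factorial : ℝ)) *
          ((-1 : ℝ) ^ j * ∑ p ∈ range (j + 1), (-1 : ℝ) ^ p * (p.factorial : ℝ) * S j p * T p)
        = (-1 : ℝ) ^ m * s n m / m.factorial *
          (s m j * ∑ p ∈ range (j + 1), S j p * ((-1 : ℝ) ^ p * p.factorial * T p)) := by
    intro j hj
    rw [← pow_sub_mul_pow (-1 : ℝ) (Nat.lt_succ_iff.mp (mem_range.mp hj)), mul_sum, mul_sum,
      mul_sum, mul_sum]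
    exact sum_congr rfl fun p _ => by ring
  rw [sum_congr rfl hfactor, ← mul_sum, sum_stirling_mul_sum_stirling hs hS _ hm]
  have hfact : (m.factorial : ℝ) ≠ 0 := by positivity
  field_simp
  rw [← pow_mul, pow_mul']
  norm_num

end Stirling

theorem stmt18_general (n k : ℕ) (α : ℕ → ℝ) (L : Fin k → ℝ)
    (z : ℝ) (s : ℕ → ℕ → ℝ) (S : ℕ → ℕ → ℝ)
    (hs : ∀ m ≤ n, ∀ x : ℝ,
      ∏ i ∈ range m, (x - α i) = ∑ j ∈ range (m + 1), s m j * x ^ j)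
    (hS : ∀ p ≤ n, ∀ x : ℝ,
      x ^ p = ∑ m ∈ range (p + 1), S p m * ∏ i ∈ range m, (x - α i)) :
    iterInt (List.ofFn L) (fun t => ∏ i ∈ range n, (t - α i - z)) =
      ∑ j ∈ range (n + 1), ∑ m ∈ Icc j n,
        (-1 : ℝ) ^ (m - j) * (s m j * s n m / (m.factorial : ℝ)) *
          ((-1 : ℝ) ^ j * ∑ i ∈ range (j + 1), ∑ p ∈ Icc i j,
            (-1 : ℝ) ^ p * (p.factorial : ℝ) * (p.choose i : ℝ) * S j p *
              (∏ q, L q) ^ (p - i + 1) / (((p - i : ℕ) : ℝ) + 1) ^ k * (-z) ^ i) := by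
  set T : ℕ → ℝ := fun p => iterInt (List.ofFn L) (fun t => (t - z) ^ p)
  have hcauchy : iterInt (List.ofFn L) (fun t => ∏ i ∈ range n, (t - α i - z)) =
      ∑ m ∈ range (n + 1), s n m * T m := by
    have hexpand : (fun t => ∏ i ∈ range n, (t - α i - z)) =
        fun t => ∑ m ∈ range (n + 1), s n m * (t - z) ^ m := by
      funext t
      rw [← hs n le_rfl]
      exact prod_congr rfl fun i _ => by ring
    rw [hexpand, iterInt_sum _ _ fun m _ => by fun_prop]
    exact sum_congr rfl fun m _ => iterInt_const_mul _ _ _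
  have hbernoulli : ∀ j, ∑ i ∈ range (j + 1), ∑ p ∈ Icc i j,
      (-1 : ℝ) ^ p * (p.factorial : ℝ) * (p.choose i : ℝ) * S j p *
        (∏ q, L q) ^ (p - i + 1) / (((p - i : ℕ) : ℝ) + 1) ^ k * (-z) ^ i =
      ∑ p ∈ range (j + 1), (-1 : ℝ) ^ p * (p.factorial : ℝ) * S j p * T p := by
    intro j
    rw [sum_comm' (s' := fun p => range (p + 1)) (t' := range (j + 1))
      (by intro i p; simp only [mem_range, mem_Icc]; omega)]
    refine sum_congr rfl fun p _ => ?_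
    simp only [T, iterInt_sub_pow, List.prod_ofFn, List.length_ofFn, mul_sum]
    exact sum_congr rfl fun i _ => by ring
  simp only [hcauchy, hbernoulli]
  exact (sum_stirling_bernoulli hs hS T).symm

theorem stmt18 (n k : ℕ) (hk : 1 ≤ k) (α : ℕ → ℝ) (L : Fin k → ℝ)
    (hL : ∀ i, L i ≠ 0) (z : ℝ) (s : ℕ → ℕ → ℝ) (S : ℕ → ℕ → ℝ)
    (hs : ∀ m ≤ n, ∀ x : ℝ,
      ∏ i ∈ range m, (x - α i) = ∑ j ∈ range (m + 1), s m j * x ^ j)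
    (hS : ∀ p ≤ n, ∀ x : ℝ,
      x ^ p = ∑ m ∈ range (p + 1), S p m * ∏ i ∈ range m, (x - α i)) :
    iterInt (List.ofFn L) (fun t => ∏ i ∈ range n, (t - α i - z)) =
      ∑ j ∈ range (n + 1), ∑ m ∈ Icc j n,
        (-1 : ℝ) ^ (m - j) * (s m j * s n m / (m.factorial : ℝ)) *
          ((-1 : ℝ) ^ j * ∑ i ∈ range (j + 1), ∑ p ∈ Icc i j,
            (-1 : ℝ) ^ p * (p.factorial : ℝ) * (p.choose i : ℝ) * S j p *
              (∏ q, L q) ^ (p - i + 1) / (((p - i : ℕ) : ℝ) + 1) ^ k * (-z) ^ i) :=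
  stmt18_general n k α L z s S hs hS
end
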